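/- arXiv:2510.01372 — 3 statements merged into one kernel-verified Lean document; each statement's English description precedes it below -/
import Mathlib

section
/- One has 𝒢(1,1) = −(9√3)/(4π). -/
open intervalIntegral Real Complex

/-- `u(t) = (−1 + i√(4t−1))/(2t)`. -/
noncomputable def uu (t : ℝ) : ℂ :=
  (-1 + Complex.I * (Real.sqrt (4 * t - 1) : ℝ)) / (2 * t)

/-- The renormalized Green's function of the triangular-lattice walk:
`𝒢(x,y) = (3/π) ∫_{1/4}^{1} (4t−1)^{−1/2} ( t^y Σ_{j=1}^{x} C(x,j)(1−t)^{j−1} Re(u(t)^j)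
  − Σ_{ℓ=0}^{y−1} t^ℓ ) dt`. -/
noncomputable def calG (x y : ℕ) : ℝ :=
  (3 / Real.pi) * ∫ t in (1/4 : ℝ)..1,
    (1 / Real.sqrt (4 * t - 1)) *
      (t ^ y * ∑ j ∈ Finset.Icc 1 x, (x.choose j : ℝ) * (1 - t) ^ (j - 1) * ((uu t) ^ j).re
        - ∑ l ∈ Finset.range y, t ^ l)

/-! For `x = y = 1` the bracket is `t · Re u(t) − 1`, and `Re u(t) = −1/(2t)` makes it the constant
`−3/2`; what remains is `∫_{1/4}^{1} (4t−1)^{−1/2} dt = √3/2`. -/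

lemma re_uu (t : ℝ) : (uu t).re = -1 / (2 * t) := by
  rw [uu, show (2 : ℂ) * t = ((2 * t : ℝ) : ℂ) by push_cast; ring, Complex.div_ofReal_re]
  simp

theorem integral_one_div_sqrt_mul_sub {a b c : ℝ} (ha : 0 < a) (hc : b ≤ a * c) :
    ∫ t in b / a..c, 1 / √(a * t - b) = 2 * √(a * c - b) / a := by
  have hbc : b / a ≤ c := by rwa [div_le_iff₀' ha]
  have as_rpow : ∀ t ∈ Set.uIcc (b / a) c, 1 / √(a * t - b) = (a * t - b) ^ (-(1 / 2) : ℝ) := by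
    intro t ht
    rw [Set.uIcc_of_le hbc] at ht
    have hpos : 0 ≤ a * t - b := sub_nonneg.2 ((div_le_iff₀' ha).1 ht.1)
    rw [Real.rpow_neg hpos, ← Real.sqrt_eq_rpow, one_div]
  rw [integral_congr as_rpow, integral_comp_mul_sub (fun u => u ^ (-(1 / 2) : ℝ)) ha.ne',
    mul_div_cancel₀ b ha.ne', sub_self, integral_rpow (by norm_num),
    show (-(1 / 2) : ℝ) + 1 = 1 / 2 by norm_num, ← Real.sqrt_eq_rpow, Real.zero_rpow (by norm_num)]
  simp only [smul_eq_mul]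
  field_simp
  ring

/-- `𝒢(1,1) = −(9√3)/(4π)`. -/
theorem calG_one_one : calG 1 1 = -(9 * Real.sqrt 3) / (4 * Real.pi) := by
  have integrand : ∀ t ∈ Set.uIcc (1 / 4 : ℝ) 1,
      1 / √(4 * t - 1) * (t ^ 1 * ∑ j ∈ Finset.Icc 1 1,
        ((1 : ℕ).choose j : ℝ) * (1 - t) ^ (j - 1) * ((uu t) ^ j).re
          - ∑ l ∈ Finset.range 1, t ^ l) = -(3 / 2) * (1 / √(4 * t - 1)) := by
    intro t ht
    rw [Set.uIcc_of_le (by norm_num)] at ht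
    have ht0 : t ≠ 0 := by linarith [ht.1]
    simp only [Finset.Icc_self, Finset.sum_singleton, Finset.sum_range_one, pow_one, pow_zero,
      Nat.choose_self, Nat.cast_one, one_mul, re_uu]
    field_simp
    ring
  rw [calG, integral_congr integrand, integral_const_mul,
    integral_one_div_sqrt_mul_sub (by norm_num) (by norm_num)]
  field_simp
  norm_num
end

section
/- For every pair of integers x ≥ 0, y ≥ 0 there exist rational numbers a and b such that 𝒢(x,y) = a + b·(√3/π); in particular every value 𝒢(x,y) lies in the field ℚ(√3, π). -/
open intervalIntegral Real Complex

/-! With `s = √(4t - 1)`, the number `t·u(t) = (-1 + i s)/2` is a root of `z² + z + t`, so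
`t^j Re(u(t)^j)` is a polynomial in `t` with rational coefficients, and the integrand of `𝒢(x,y)`
is a rational polynomial times `t^(-x) / √(4t - 1)`. The moments
`I_k = ∫_{1/4}^1 t^k / √(4t - 1) dt`, `k ∈ ℤ`, satisfy `(4k + 2) I_k - k I_{k-1} = √3`
(differentiate `t^k √(4t - 1)`) and `I_{-1} = 2π/3` (differentiate `2 arctan √(4t - 1)`),
so all of them lie in `ℚπ + ℚ√3`; multiplying by `3/π` gives the claim. -/

open scoped Polynomial

theorem hasDerivAt_sqrt_four_mul_sub_one {t : ℝ} (ht : 1 / 4 < t) :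
    HasDerivAt (fun s : ℝ => √(4 * s - 1)) (2 / √(4 * t - 1)) t := by
  have h := (((hasDerivAt_id' t).const_mul 4).sub_const 1).sqrt (by linarith)
  convert h using 1
  ring

theorem continuousOn_zpow_Icc_of_pos {a b : ℝ} (ha : 0 < a) (k : ℤ) :
    ContinuousOn (fun t : ℝ => t ^ k) (Set.Icc a b) :=
  continuousOn_id.zpow₀ k fun t ht => Or.inl (by linarith [ht.1] : t ≠ 0)

theorem intervalIntegrable_zpow_div_sqrt (k : ℤ) :
    IntervalIntegrable (fun t : ℝ => t ^ k / √(4 * t - 1)) MeasureTheory.volume (1 / 4) 1 := by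
  have hquarter : Set.uIcc (1 / 4 : ℝ) 1 = Set.Icc (1 / 4) 1 := Set.uIcc_of_le (by norm_num)
  have hinv :
      IntervalIntegrable (fun t : ℝ => 2 / √(4 * t - 1)) MeasureTheory.volume (1 / 4) 1 :=
    intervalIntegrable_deriv_of_nonneg (g := fun s => √(4 * s - 1)) (by fun_prop)
      (fun t ht => hasDerivAt_sqrt_four_mul_sub_one
        (min_eq_left (by norm_num : (1 / 4 : ℝ) ≤ 1) ▸ ht.1))
      (fun t _ => by positivity)
  have hzpow : ContinuousOn (fun t : ℝ => t ^ k / 2) (Set.uIcc (1 / 4) 1) :=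
    hquarter ▸ (continuousOn_zpow_Icc_of_pos (by norm_num) k).div_const 2
  refine (hinv.continuousOn_mul hzpow).congr fun t _ => ?_
  ring

noncomputable def sqrtMoment (k : ℤ) : ℝ := ∫ t in (1 / 4 : ℝ)..1, t ^ k / √(4 * t - 1)

theorem sqrtMoment_recurrence (k : ℤ) :
    (4 * k + 2) * sqrtMoment k - k * sqrtMoment (k - 1) = √3 := by
  have hderiv : ∀ t ∈ Set.Ioo (1 / 4 : ℝ) 1,
      HasDerivAt (fun s : ℝ => s ^ k * √(4 * s - 1))
        ((4 * k + 2) * (t ^ k / √(4 * t - 1)) - k * (t ^ (k - 1) / √(4 * t - 1))) t := by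
    intro t ht
    have ht0 : t ≠ 0 := by linarith [ht.1]
    have hsq : √(4 * t - 1) ^ 2 = 4 * t - 1 := Real.sq_sqrt (by linarith [ht.1])
    have hs : √(4 * t - 1) ≠ 0 := (Real.sqrt_pos.2 (by linarith [ht.1])).ne'
    refine ((hasDerivAt_zpow k t (Or.inl ht0)).mul
      (hasDerivAt_sqrt_four_mul_sub_one ht.1)).congr_deriv ?_
    rw [show t ^ k = t ^ (k - 1) * t by rw [← zpow_add_one₀ ht0]; ring_nf]
    field_simp
    linear_combination (k : ℝ) * hsq
  have hint := intervalIntegrable_zpow_div_sqrt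
  have hFTC := integral_eq_sub_of_hasDerivAt_of_le (by norm_num)
    ((continuousOn_zpow_Icc_of_pos (by norm_num) k).mul (by fun_prop)) hderiv
    (((hint k).const_mul _).sub ((hint (k - 1)).const_mul _))
  rw [integral_sub ((hint k).const_mul _) ((hint (k - 1)).const_mul _),
    intervalIntegral.integral_const_mul, intervalIntegral.integral_const_mul] at hFTC
  rw [sqrtMoment, sqrtMoment, hFTC]
  norm_num

theorem sqrtMoment_neg_one : sqrtMoment (-1) = 2 * π / 3 := by
  have hderiv : ∀ t ∈ Set.Ioo (1 / 4 : ℝ) 1,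
      HasDerivAt (fun s : ℝ => 2 * Real.arctan √(4 * s - 1))
        (t ^ (-1 : ℤ) / √(4 * t - 1)) t := by
    intro t ht
    have hsq : √(4 * t - 1) ^ 2 = 4 * t - 1 := Real.sq_sqrt (by linarith [ht.1])
    have hs : √(4 * t - 1) ≠ 0 := (Real.sqrt_pos.2 (by linarith [ht.1])).ne'
    have ht0 : t ≠ 0 := by linarith [ht.1]
    refine (((hasDerivAt_sqrt_four_mul_sub_one ht.1).arctan).const_mul 2).congr_deriv ?_
    rw [hsq, zpow_neg_one]
    field_simp
    ring
  rw [sqrtMoment, integral_eq_sub_of_hasDerivAt_of_le (by norm_num) (by fun_prop) hderiv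
    (intervalIntegrable_zpow_div_sqrt (-1))]
  norm_num [Real.arctan_sqrt_three]
  ring

theorem mem_span_of_mul_eq_sqrt_three_add {a c : ℚ} (ha : a ≠ 0) {x y : ℝ}
    (hy : y ∈ Submodule.span ℚ {π, √3}) (h : a * x = √3 + c * y) :
    x ∈ Submodule.span ℚ {π, √3} := by
  have hx : x = a⁻¹ • (√3 + c • y) := by
    rw [Rat.smul_def, Rat.smul_def, ← h, Rat.cast_inv]
    field_simp
  rw [hx]
  exact Submodule.smul_mem _ _
    (add_mem (Submodule.subset_span (by simp)) (Submodule.smul_mem _ _ hy))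

theorem sqrtMoment_mem_span (k : ℤ) : sqrtMoment k ∈ Submodule.span ℚ {π, √3} := by
  induction k using Int.induction_on with
  | zero =>
    refine mem_span_of_mul_eq_sqrt_three_add (a := 2) (c := 0) two_ne_zero (zero_mem _) ?_
    simpa using sqrtMoment_recurrence 0
  | succ i ih =>
    refine mem_span_of_mul_eq_sqrt_three_add (a := 4 * i + 6) (c := i + 1) (by positivity) ih ?_
    have h := sqrtMoment_recurrence (i + 1)
    push_cast at h ⊢
    rw [add_sub_cancel_right] at h
    linear_combination h
  | pred i ih =>
    rcases Nat.eq_zero_or_pos i with rfl | hi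
    · rw [Nat.cast_zero, neg_zero, zero_sub, sqrtMoment_neg_one,
        show (2 * π / 3 : ℝ) = (2 / 3 : ℚ) • π by rw [Rat.smul_def]; push_cast; ring]
      exact Submodule.smul_mem _ _ (Submodule.subset_span (by simp))
    refine mem_span_of_mul_eq_sqrt_three_add (a := i) (c := 4 * i - 2) (by positivity) ih ?_
    have h := sqrtMoment_recurrence (-i)
    push_cast at h ⊢
    linear_combination h

theorem integral_aeval_mul_zpow_div_sqrt_mem_span (P : ℚ[X]) (m : ℤ) :
    (∫ t in (1 / 4 : ℝ)..1, Polynomial.aeval t P * t ^ m / √(4 * t - 1)) ∈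
      Submodule.span ℚ {π, √3} := by
  have hexpand : Set.EqOn (fun t : ℝ => Polynomial.aeval t P * t ^ m / √(4 * t - 1))
      (fun t => ∑ i ∈ Finset.range (P.natDegree + 1),
        (P.coeff i : ℝ) * (t ^ ((i : ℤ) + m) / √(4 * t - 1))) (Set.uIcc (1 / 4) 1) := by
    intro t ht
    have ht0 : t ≠ 0 := by
      rw [Set.uIcc_of_le (by norm_num)] at ht
      linarith [ht.1]
    simp only [Polynomial.aeval_eq_sum_range, Finset.sum_mul, Finset.sum_div, Rat.smul_def,
      zpow_add₀ ht0, zpow_natCast]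
    exact Finset.sum_congr rfl fun i _ => by ring
  rw [integral_congr hexpand,
    integral_finsetSum fun i _ => (intervalIntegrable_zpow_div_sqrt _).const_mul _]
  refine Submodule.sum_mem _ fun i _ => ?_
  rw [intervalIntegral.integral_const_mul, ← Rat.smul_def]
  exact Submodule.smul_mem _ _ (sqrtMoment_mem_span _)

noncomputable def rePowPoly : ℕ → ℚ[X]
  | 0 => 1
  | 1 => Polynomial.C (-1 / 2)
  | n + 2 => -(rePowPoly (n + 1) + Polynomial.X * rePowPoly n)

theorem ofReal_mul_uu {t : ℝ} (ht : t ≠ 0) :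
    (t : ℂ) * uu t = (-1 + I * √(4 * t - 1)) / 2 := by
  have : (t : ℂ) ≠ 0 := ofReal_ne_zero.2 ht
  rw [uu]
  field_simp

theorem re_pow_ofReal_mul_uu {t : ℝ} (ht : 1 / 4 ≤ t) (j : ℕ) :
    (((t : ℂ) * uu t) ^ j).re = Polynomial.aeval t (rePowPoly j) := by
  rw [ofReal_mul_uu (by linarith)]
  set v : ℂ := (-1 + I * √(4 * t - 1)) / 2
  have hv : v ^ 2 = -(v + t) := by
    have hsq : ((√(4 * t - 1) : ℝ) : ℂ) ^ 2 = 4 * t - 1 := by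
      rw [← ofReal_pow, Real.sq_sqrt (by linarith)]; push_cast; ring
    linear_combination (((√(4 * t - 1) : ℝ) : ℂ) ^ 2 / 4) * I_sq - hsq / 4
  induction j using rePowPoly.induct with
  | case1 => simp [rePowPoly]
  | case2 => simp [rePowPoly, v]
  | case3 n ihn ihn1 =>
    rw [show v ^ (n + 2) = -(v ^ (n + 1) + t * v ^ n) by linear_combination v ^ n * hv]
    simp only [rePowPoly, neg_re, add_re, re_ofReal_mul, map_neg, map_add, map_mul,
      Polynomial.aeval_X, ihn, ihn1]

theorem pow_mul_re_uu_pow {t : ℝ} (ht : 1 / 4 ≤ t) (j : ℕ) :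
    t ^ j * (uu t ^ j).re = Polynomial.aeval t (rePowPoly j) := by
  rw [← re_pow_ofReal_mul_uu ht, mul_pow, ← ofReal_pow, re_ofReal_mul]

open Polynomial in
noncomputable def calGNumerator (x y : ℕ) : ℚ[X] :=
  X ^ y * ∑ j ∈ Finset.Icc 1 x,
      (x.choose j : ℚ[X]) * (1 - X) ^ (j - 1) * rePowPoly j * X ^ (x - j)
    - X ^ x * ∑ l ∈ Finset.range y, X ^ l

theorem calG_integrand_eq {t : ℝ} (ht : 1 / 4 ≤ t) (x y : ℕ) :
    t ^ y * ∑ j ∈ Finset.Icc 1 x, (x.choose j : ℝ) * (1 - t) ^ (j - 1) * (uu t ^ j).re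
      - ∑ l ∈ Finset.range y, t ^ l =
      Polynomial.aeval t (calGNumerator x y) * t ^ (-(x : ℤ)) := by
  have ht0 : t ≠ 0 := by linarith
  have hterm : ∀ j ∈ Finset.Icc 1 x,
      Polynomial.aeval t ((x.choose j : ℚ[X]) * (1 - Polynomial.X) ^ (j - 1) * rePowPoly j *
        Polynomial.X ^ (x - j)) =
        t ^ x * ((x.choose j : ℝ) * (1 - t) ^ (j - 1) * (uu t ^ j).re) := by
    intro j hj
    rw [← Nat.add_sub_cancel' (Finset.mem_Icc.1 hj).2, pow_add, Nat.add_sub_cancel_left]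
    simp only [map_mul, map_pow, map_sub, map_one, map_natCast, Polynomial.aeval_X,
      ← pow_mul_re_uu_pow ht]
    ring
  rw [calGNumerator, map_sub, map_mul, map_mul, map_sum, Finset.sum_congr rfl hterm,
    ← Finset.mul_sum, zpow_neg, zpow_natCast]
  simp only [map_pow, map_sum, Polynomial.aeval_X]
  field_simp

theorem calG_eq_integral_calGNumerator (x y : ℕ) :
    calG x y = 3 / π *
      ∫ t in (1 / 4 : ℝ)..1,
        Polynomial.aeval t (calGNumerator x y) * t ^ (-(x : ℤ)) / √(4 * t - 1) := by
  rw [calG, integral_congr fun t ht => ?_]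
  rw [Set.uIcc_of_le (by norm_num)] at ht
  simp only [calG_integrand_eq ht.1]
  ring

/-- Every value `𝒢(x,y)` lies in `ℚ(√3, π)`: there are rationals `a`, `b` with
`𝒢(x,y) = a + b·(√3/π)`. -/
theorem calG_mem_Q_sqrt3_pi (x y : ℕ) :
    ∃ a b : ℚ, calG x y = (a : ℝ) + (b : ℝ) * (Real.sqrt 3 / Real.pi) := by
  obtain ⟨a, b, hab⟩ := Submodule.mem_span_pair.1
    (integral_aeval_mul_zpow_div_sqrt_mem_span (calGNumerator x y) (-x))
  refine ⟨3 * a, 3 * b, ?_⟩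
  rw [calG_eq_integral_calGNumerator, ← hab, Rat.smul_def, Rat.smul_def]
  push_cast
  field_simp
end

section
/- The function 𝒢 is discrete harmonic for the triangular-lattice Laplacian at every point of the open quadrant: for all integers x ≥ 1 and y ≥ 1, 𝒢(x,y) = (1/3)·( 𝒢(x+1, y) + 𝒢(x−1, y+1) + 𝒢(x, y−1) ). -/
open intervalIntegral Real Complex

/-!
Write `w = 1 - t` and `u = u(t)`, a root of `t u² + u + 1 = 0`. The sum
`S_x = ∑_{j=1}^{x} C(x,j) w^{j-1} u^j` is the difference quotient `((1 + w u)^x - 1) / w`, so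
`S_{x+1} = S_x + u (1 + w u)^x`. With these two relations, the discrete Laplacian of
`K(x,y) = t^y S_x - ∑_{ℓ<y} t^ℓ` at `(x,y) = (a+1,b+1)` is `t^b (1 + w u)^a w (t u² + u + 1) = 0`.
The integrand of `𝒢` is `(4t-1)^{-1/2} Re K(x,y)`, so the identity holds pointwise in `t`, and it
integrates because `(4t-1)^{-1/2}` is the nonnegative derivative of `√(4t-1)/2`.
-/

open Finset MeasureTheory

section CommRing

variable {R : Type*} [CommRing R]

def binomSum (w u : R) (x : ℕ) : R :=
  ∑ j ∈ Icc 1 x, (x.choose j : R) * w ^ (j - 1) * u ^ j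

theorem binomSum_eq_sum_range (w u : R) (x : ℕ) :
    binomSum w u x = ∑ k ∈ range x, (x.choose (k + 1) : R) * w ^ k * u ^ (k + 1) := by
  rw [binomSum, ← Ico_add_one_right_eq_Icc, sum_Ico_eq_sum_range]
  simp only [add_comm 1, add_tsub_cancel_right]

theorem binomSum_succ (w u : R) (x : ℕ) :
    binomSum w u (x + 1) = binomSum w u x + u * (1 + w * u) ^ x := by
  have hbinom :
      ∑ k ∈ range (x + 1), (x.choose k : R) * w ^ k * u ^ (k + 1) = u * (1 + w * u) ^ x := by
    rw [add_comm (1 : R), add_pow, mul_sum]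
    refine sum_congr rfl fun k _ => ?_
    ring
  simp only [binomSum_eq_sum_range, Nat.choose_succ_succ', Nat.cast_add, add_mul, sum_add_distrib,
    hbinom]
  rw [sum_range_succ, Nat.choose_succ_self, Nat.cast_zero, zero_mul, zero_mul, add_zero, add_comm]

theorem mul_binomSum (w u : R) (x : ℕ) : w * binomSum w u x = (1 + w * u) ^ x - 1 := by
  induction x with
  | zero => simp [binomSum]
  | succ n ih => rw [binomSum_succ, mul_add, ih, pow_succ]; ring

def greenKernel (t u : R) (x y : ℕ) : R :=
  t ^ y * binomSum (1 - t) u x - ∑ l ∈ range y, t ^ l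

theorem greenKernel_harmonic {t u : R} (hu : t * u ^ 2 + u + 1 = 0) (a b : ℕ) :
    3 * greenKernel t u (a + 1) (b + 1) =
      greenKernel t u (a + 2) (b + 1) + greenKernel t u a (b + 2) + greenKernel t u (a + 1) b := by
  have hS₂ := binomSum_succ (1 - t) u (a + 1)
  have hS₁ := binomSum_succ (1 - t) u a
  have hw := mul_binomSum (1 - t) u (a + 1)
  simp only [greenKernel, sum_range_succ]
  linear_combination (-t ^ (b + 1)) * hS₂ + t ^ (b + 2) * hS₁ + (-t ^ b * (1 - t)) * hw
    + (-t ^ b * (1 - t) * (1 + (1 - t) * u) ^ a) * hu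

end CommRing

theorem continuous_greenKernel {R : Type*} [CommRing R] [TopologicalSpace R] [IsTopologicalRing R]
    (x y : ℕ) : Continuous fun p : R × R => greenKernel p.1 p.2 x y := by
  unfold greenKernel binomSum
  fun_prop

theorem continuousOn_uu : ContinuousOn uu {0}ᶜ := by
  unfold uu
  refine ContinuousOn.div (by fun_prop) (by fun_prop) fun t ht => ?_
  simpa using ht

theorem uu_quadratic {t : ℝ} (ht : 1 / 4 ≤ t) : (t : ℂ) * uu t ^ 2 + uu t + 1 = 0 := by
  have ht₀ : (t : ℂ) ≠ 0 := by norm_cast; positivity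
  have hsqrt : ((√(4 * t - 1) : ℝ) : ℂ) ^ 2 = 4 * t - 1 := by
    norm_cast; rw [sq_sqrt (by linarith)]
  rw [uu]
  field_simp
  linear_combination Complex.I ^ 2 * hsqrt + (4 * (t : ℂ) - 1) * Complex.I_sq

theorem calG_integrand_eq_re (x y : ℕ) (t : ℝ) :
    t ^ y * ∑ j ∈ Icc 1 x, (x.choose j : ℝ) * (1 - t) ^ (j - 1) * ((uu t) ^ j).re
        - ∑ l ∈ range y, t ^ l = (greenKernel (t : ℂ) (uu t) x y).re := by
  simp only [greenKernel, binomSum, mul_sum, Complex.sub_re, Complex.re_sum]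
  congr 1
  · refine sum_congr rfl fun j _ => ?_
    have : (t : ℂ) ^ y * ((x.choose j : ℂ) * (1 - (t : ℂ)) ^ (j - 1) * uu t ^ j) =
        ((t ^ y * (x.choose j * (1 - t) ^ (j - 1)) : ℝ) : ℂ) * uu t ^ j := by
      push_cast; ring
    rw [this, Complex.re_ofReal_mul]
    ring
  · norm_cast

theorem intervalIntegrable_one_div_sqrt_four_mul_sub_one :
    IntervalIntegrable (fun t : ℝ => 1 / √(4 * t - 1)) volume (1 / 4) 1 := by
  refine intervalIntegral.intervalIntegrable_deriv_of_nonneg (g := fun t => √(4 * t - 1) / 2)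
    (by fun_prop) (fun t ht => ?_) (fun t _ => by positivity)
  have ht : 0 < 4 * t - 1 := by norm_num at ht; linarith [ht.1]
  refine (((((hasDerivAt_id' t).const_mul 4).sub_const 1).sqrt ht.ne').div_const 2).congr_deriv ?_
  field_simp
  norm_num

noncomputable def greenIntegrand (x y : ℕ) (t : ℝ) : ℝ :=
  1 / √(4 * t - 1) * (greenKernel (t : ℂ) (uu t) x y).re

theorem calG_eq_integral_greenIntegrand (x y : ℕ) :
    calG x y = 3 / π * ∫ t in (1 / 4 : ℝ)..1, greenIntegrand x y t := by
  simp only [calG, greenIntegrand, calG_integrand_eq_re]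

theorem intervalIntegrable_greenIntegrand (x y : ℕ) :
    IntervalIntegrable (greenIntegrand x y) volume (1 / 4) 1 := by
  have huu : ContinuousOn uu (Set.uIcc (1 / 4) 1) :=
    continuousOn_uu.mono fun t ht => by
      rw [Set.uIcc_of_le (by norm_num)] at ht
      exact (lt_of_lt_of_le (by norm_num) ht.1).ne'
  have hkernel : ContinuousOn (fun t : ℝ => greenKernel (t : ℂ) (uu t) x y) (Set.uIcc (1 / 4) 1) :=
    (continuous_greenKernel x y).comp_continuousOn (f := fun t : ℝ => ((t : ℂ), uu t))
      (Complex.continuous_ofReal.continuousOn.prodMk huu)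
  exact intervalIntegrable_one_div_sqrt_four_mul_sub_one.mul_continuousOn
    (Complex.continuous_re.comp_continuousOn hkernel)

theorem greenIntegrand_harmonic {t : ℝ} (ht : 1 / 4 ≤ t) (a b : ℕ) :
    3 * greenIntegrand (a + 1) (b + 1) t =
      greenIntegrand (a + 2) (b + 1) t + greenIntegrand a (b + 2) t + greenIntegrand (a + 1) b t := by
  have h := congrArg Complex.re (greenKernel_harmonic (uu_quadratic ht) a b)
  simp only [Complex.mul_re, Complex.re_ofNat, Complex.im_ofNat, zero_mul, sub_zero,
    Complex.add_re] at h
  simp only [greenIntegrand]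
  linear_combination 1 / √(4 * t - 1) * h

/-- `𝒢` is discrete harmonic for the triangular-lattice Laplacian at every point of the
open quadrant: for `x ≥ 1`, `y ≥ 1`,
`𝒢(x,y) = (1/3)(𝒢(x+1,y) + 𝒢(x−1,y+1) + 𝒢(x,y−1))`. -/
theorem calG_harmonic (x y : ℕ) (hx : 1 ≤ x) (hy : 1 ≤ y) :
    calG x y = (1/3) * (calG (x+1) y + calG (x-1) (y+1) + calG x (y-1)) := by
  obtain ⟨a, rfl⟩ := Nat.exists_eq_add_of_le' hx
  obtain ⟨b, rfl⟩ := Nat.exists_eq_add_of_le' hy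
  have hf := intervalIntegrable_greenIntegrand
  have hint : 3 * ∫ t in (1 / 4 : ℝ)..1, greenIntegrand (a + 1) (b + 1) t =
      (∫ t in (1 / 4 : ℝ)..1, greenIntegrand (a + 2) (b + 1) t) +
        (∫ t in (1 / 4 : ℝ)..1, greenIntegrand a (b + 2) t) +
        ∫ t in (1 / 4 : ℝ)..1, greenIntegrand (a + 1) b t := by
    rw [← intervalIntegral.integral_const_mul, ← intervalIntegral.integral_add (hf _ _) (hf _ _),
      ← intervalIntegral.integral_add ((hf _ _).add (hf _ _)) (hf _ _)]
    refine intervalIntegral.integral_congr fun t ht => greenIntegrand_harmonic ?_ a b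
    rw [Set.uIcc_of_le (by norm_num)] at ht
    exact ht.1
  simp only [calG_eq_integral_greenIntegrand, Nat.add_sub_cancel]
  linear_combination 3 / π / 3 * hint
end
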